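/- Let n ≥ 2, let μ₁, μ₂ be exchangeable probability measures on (Fin n → ℕ), and let μ = μ₁.prod μ₂. Define ER^⊥ = μ₁{c | c 0 = c 1} · μ₂{c | c 0 = c 1} + μ₁{c | c 0 ≠ c 1} · μ₂{c | c 0 ≠ c 1}, and assume ER^⊥ < 1. Define the telescopic adjusted Rand index TARI(c₁, c₂) = (R(c₁, c₂) − ER^⊥) / (1 − ER^⊥), where R(c₁, c₂) = (n choose 2)⁻¹ · Σ_{i < j} [𝟙(c₁ i = c₁ j ∧ c₂ i = c₂ j) + 𝟙(c₁ i ≠ c₁ j ∧ c₂ i ≠ c₂ j)] is the Rand index. Then the expected value of TARI under μ is 0: ∫ TARI dμ = 0. -/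

import Mathlib

open MeasureTheory

/-! Exchangeability makes the law of `(c i, c j)` the same for every pair `i ≠ j`, so each
summand of the Rand index of two independent partitions has expectation `ER^⊥`, hence so has
their average `R`; the TARI `(R - ER^⊥) / (1 - ER^⊥)` therefore has mean zero. -/

section Exchangeable

variable {ι α : Type*} [MeasurableSpace α]

lemma Equiv.Perm.exists_apply_eq_pair {i j i' j' : ι} (hij : i ≠ j) (hij' : i' ≠ j') :
    ∃ σ : Equiv.Perm ι, σ i = i' ∧ σ j = j' := by
  have inj {a b : ι} (hab : a ≠ b) : Function.Injective ![a, b] := by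
    intro k l; fin_cases k <;> fin_cases l <;> simp [hab, hab.symm]
  obtain ⟨σ, hσ⟩ := Equiv.Perm.exists_extending_pair _ _ (inj hij) (inj hij')
  exact ⟨σ, hσ 0, hσ 1⟩

lemma measure_pair_mem_eq_of_exchangeable (μ : Measure (ι → α))
    (hexch : ∀ σ : Equiv.Perm ι, μ.map (fun c : ι → α => c ∘ σ) = μ)
    {i j i' j' : ι} (hij : i ≠ j) (hij' : i' ≠ j') (s : Set (α × α)) :
    μ {c | (c i, c j) ∈ s} = μ {c | (c i', c j') ∈ s} := by
  obtain ⟨σ, hσi, hσj⟩ := Equiv.Perm.exists_apply_eq_pair hij' hij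
  let e : (ι → α) ≃ᵐ (ι → α) := MeasurableEquiv.arrowCongr' σ.symm (MeasurableEquiv.refl α)
  have he : (e : (ι → α) → ι → α) = fun c => c ∘ σ := rfl
  calc μ {c | (c i, c j) ∈ s} = μ (e ⁻¹' {c | (c i', c j') ∈ s}) := by
        simp [he, hσi, hσj]
    _ = μ {c | (c i', c j') ∈ s} := by rw [← e.map_apply, he, hexch]

end Exchangeable

lemma ite_mem_and_mem_eq_indicator_prod {α β : Type*} (s : Set α) (t : Set β)
    [DecidablePred (· ∈ s)] [DecidablePred (· ∈ t)] :
    (fun p : α × β => if p.1 ∈ s ∧ p.2 ∈ t then (1 : ℝ) else 0) = (s ×ˢ t).indicator 1 := by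
  ext p
  simp [Set.indicator_apply, Set.mem_prod]

section ProductIndicator

variable {α β : Type*} [MeasurableSpace α] [MeasurableSpace β] {s : Set α} {t : Set β}

lemma integral_ite_mem_and_mem_prod (μ : Measure α) (ν : Measure β) [SFinite ν]
    [DecidablePred (· ∈ s)] [DecidablePred (· ∈ t)] (hs : MeasurableSet s) (ht : MeasurableSet t) :
    ∫ p, (if p.1 ∈ s ∧ p.2 ∈ t then (1 : ℝ) else 0) ∂(μ.prod ν) = μ.real s * ν.real t := by
  rw [ite_mem_and_mem_eq_indicator_prod, integral_indicator_one (hs.prod ht),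
    measureReal_prod_prod]

lemma integrable_ite_mem_and_mem_prod (μ : Measure α) (ν : Measure β) [IsFiniteMeasure μ]
    [IsFiniteMeasure ν] [DecidablePred (· ∈ s)] [DecidablePred (· ∈ t)] (hs : MeasurableSet s)
    (ht : MeasurableSet t) :
    Integrable (fun p : α × β => if p.1 ∈ s ∧ p.2 ∈ t then (1 : ℝ) else 0) (μ.prod ν) := by
  rw [ite_mem_and_mem_eq_indicator_prod]
  exact (integrable_const 1).indicator (hs.prod ht)

end ProductIndicator

section RandIndex

variable {ι α : Type*} [MeasurableSpace α] [MeasurableEq α]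

lemma measurableSet_apply_eq (i j : ι) : MeasurableSet {c : ι → α | c i = c j} :=
  measurableSet_eq_fun (measurable_pi_apply i) (measurable_pi_apply j)

lemma measurableSet_apply_ne (i j : ι) : MeasurableSet {c : ι → α | c i ≠ c j} :=
  (measurableSet_apply_eq i j).compl

variable [DecidableEq α]

def pairAgreement (c₁ c₂ : ι → α) (i j : ι) : ℝ :=
  (if c₁ i = c₁ j ∧ c₂ i = c₂ j then 1 else 0) + (if c₁ i ≠ c₁ j ∧ c₂ i ≠ c₂ j then 1 else 0)

noncomputable def randIndex {n : ℕ} (c₁ c₂ : Fin n → α) : ℝ :=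
  (n.choose 2 : ℝ)⁻¹ *
    ∑ q ∈ Finset.univ.filter (fun q : Fin n × Fin n => q.1 < q.2), pairAgreement c₁ c₂ q.1 q.2

variable (μ₁ μ₂ : Measure (ι → α))

lemma integrable_pairAgreement [IsFiniteMeasure μ₁] [IsFiniteMeasure μ₂] (i j : ι) :
    Integrable (fun p : (ι → α) × (ι → α) => pairAgreement p.1 p.2 i j) (μ₁.prod μ₂) :=
  (integrable_ite_mem_and_mem_prod μ₁ μ₂ (measurableSet_apply_eq i j)
    (measurableSet_apply_eq i j)).add
  (integrable_ite_mem_and_mem_prod μ₁ μ₂ (measurableSet_apply_ne i j)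
    (measurableSet_apply_ne i j))

lemma integral_pairAgreement [IsFiniteMeasure μ₁] [IsFiniteMeasure μ₂] (i j : ι) :
    ∫ p, pairAgreement p.1 p.2 i j ∂(μ₁.prod μ₂) =
      μ₁.real {c | c i = c j} * μ₂.real {c | c i = c j} +
        μ₁.real {c | c i ≠ c j} * μ₂.real {c | c i ≠ c j} := by
  have hEq := measurableSet_apply_eq (α := α) i j
  have hNe := measurableSet_apply_ne (α := α) i j
  show ∫ p, ((if p.1 ∈ {c | c i = c j} ∧ p.2 ∈ {c | c i = c j} then (1 : ℝ) else 0) +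
    (if p.1 ∈ {c | c i ≠ c j} ∧ p.2 ∈ {c | c i ≠ c j} then (1 : ℝ) else 0)) ∂(μ₁.prod μ₂) = _
  rw [integral_add (integrable_ite_mem_and_mem_prod μ₁ μ₂ hEq hEq)
      (integrable_ite_mem_and_mem_prod μ₁ μ₂ hNe hNe),
    integral_ite_mem_and_mem_prod μ₁ μ₂ hEq hEq, integral_ite_mem_and_mem_prod μ₁ μ₂ hNe hNe]

lemma integral_pairAgreement_of_exchangeable [IsFiniteMeasure μ₁] [IsFiniteMeasure μ₂]
    (hexch₁ : ∀ σ : Equiv.Perm ι, μ₁.map (fun c : ι → α => c ∘ σ) = μ₁)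
    (hexch₂ : ∀ σ : Equiv.Perm ι, μ₂.map (fun c : ι → α => c ∘ σ) = μ₂)
    {i j i' j' : ι} (hij : i ≠ j) (hij' : i' ≠ j') :
    ∫ p, pairAgreement p.1 p.2 i j ∂(μ₁.prod μ₂) =
      ∫ p, pairAgreement p.1 p.2 i' j' ∂(μ₁.prod μ₂) := by
  have h {μ : Measure (ι → α)} (hexch : ∀ σ : Equiv.Perm ι, μ.map (fun c => c ∘ σ) = μ)
      (s : Set (α × α)) : μ.real {c | (c i, c j) ∈ s} = μ.real {c | (c i', c j') ∈ s} := by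
    rw [measureReal_def, measure_pair_mem_eq_of_exchangeable μ hexch hij hij', measureReal_def]
  simp only [integral_pairAgreement]
  exact congr_arg₂ (· + ·)
    (congr_arg₂ (· * ·) (h hexch₁ {p | p.1 = p.2}) (h hexch₂ {p | p.1 = p.2}))
    (congr_arg₂ (· * ·) (h hexch₁ {p | p.1 ≠ p.2}) (h hexch₂ {p | p.1 ≠ p.2}))

lemma integrable_randIndex {n : ℕ} (μ₁ μ₂ : Measure (Fin n → α)) [IsFiniteMeasure μ₁]
    [IsFiniteMeasure μ₂] :
    Integrable (fun p : (Fin n → α) × (Fin n → α) => randIndex p.1 p.2) (μ₁.prod μ₂) :=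
  (integrable_finsetSum _ fun _ _ => integrable_pairAgreement μ₁ μ₂ _ _).const_mul _

lemma integral_randIndex_of_exchangeable {n : ℕ} (μ₁ μ₂ : Measure (Fin n → α))
    [IsFiniteMeasure μ₁] [IsFiniteMeasure μ₂]
    (hexch₁ : ∀ σ : Equiv.Perm (Fin n), μ₁.map (fun c : Fin n → α => c ∘ σ) = μ₁)
    (hexch₂ : ∀ σ : Equiv.Perm (Fin n), μ₂.map (fun c : Fin n → α => c ∘ σ) = μ₂)
    {i j : Fin n} (hij : i ≠ j) :
    ∫ p, randIndex p.1 p.2 ∂(μ₁.prod μ₂) = ∫ p, pairAgreement p.1 p.2 i j ∂(μ₁.prod μ₂) := by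
  have hn : 2 ≤ n := by
    have := Fin.val_ne_of_ne hij
    omega
  have hchoose : (n.choose 2 : ℝ) ≠ 0 := Nat.cast_ne_zero.2 (Nat.choose_pos hn).ne'
  unfold randIndex
  rw [integral_const_mul, integral_finsetSum _ fun _ _ => integrable_pairAgreement μ₁ μ₂ _ _,
    Finset.sum_congr rfl fun q hq => integral_pairAgreement_of_exchangeable μ₁ μ₂ hexch₁ hexch₂
      (Finset.mem_filter.1 hq).2.ne hij,
    Finset.sum_const, Fintype.card_product_filter_lt, Fintype.card_fin, nsmul_eq_mul,
    inv_mul_cancel_left₀ hchoose]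

end RandIndex

/-- Under independence of the two exchangeable random partitions, the expected
telescopic adjusted Rand index equals `0`. -/
theorem stmt_13 (n : ℕ) (hn : 2 ≤ n)
    (μ₁ μ₂ : Measure (Fin n → ℕ)) [IsProbabilityMeasure μ₁] [IsProbabilityMeasure μ₂]
    (hexch₁ : ∀ σ : Equiv.Perm (Fin n),
      μ₁.map (fun c : Fin n → ℕ => c ∘ σ) = μ₁)
    (hexch₂ : ∀ σ : Equiv.Perm (Fin n),
      μ₂.map (fun c : Fin n → ℕ => c ∘ σ) = μ₂)
    (ERperp : ℝ)
    (hER : ERperp =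
      (μ₁ {c | c ⟨0, by omega⟩ = c ⟨1, by omega⟩}).toReal *
          (μ₂ {c | c ⟨0, by omega⟩ = c ⟨1, by omega⟩}).toReal +
        (μ₁ {c | c ⟨0, by omega⟩ ≠ c ⟨1, by omega⟩}).toReal *
          (μ₂ {c | c ⟨0, by omega⟩ ≠ c ⟨1, by omega⟩}).toReal) :
    ∫ p, ((((n.choose 2 : ℝ)⁻¹ *
          ∑ q ∈ Finset.univ.filter (fun q : Fin n × Fin n => q.1 < q.2),
            ((if p.1 q.1 = p.1 q.2 ∧ p.2 q.1 = p.2 q.2 then (1 : ℝ) else 0) +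
              (if p.1 q.1 ≠ p.1 q.2 ∧ p.2 q.1 ≠ p.2 q.2 then (1 : ℝ) else 0))) -
          ERperp) / (1 - ERperp)) ∂(μ₁.prod μ₂) = 0 := by
  have h01 : (⟨0, by omega⟩ : Fin n) ≠ ⟨1, by omega⟩ := by simp [Fin.ext_iff]
  have hR : ∫ p, randIndex p.1 p.2 ∂(μ₁.prod μ₂) = ERperp := by
    rw [integral_randIndex_of_exchangeable μ₁ μ₂ hexch₁ hexch₂ h01, integral_pairAgreement, hER]
    rfl
  show ∫ p, (randIndex p.1 p.2 - ERperp) / (1 - ERperp) ∂(μ₁.prod μ₂) = 0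
  rw [integral_div, integral_sub (integrable_randIndex μ₁ μ₂) (integrable_const ERperp), hR,
    integral_const]
  simp
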